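/- arXiv:1503.01219 — 3 statements merged into one kernel-verified Lean document; each statement's English description precedes it below -/
import Mathlib

section
/- Let G be a finite connected graph of order n, and let P = {P₁, P₂, P₃} be a set of three longest paths of G. If f(G,P) > 0, then n ≥ (3·l(G) + Σ_{P∈P} |X_P(P)| + 3)/2, where X_P(P) = V(P) \ (V(P') ∪ V(P'')) with {P',P''} = P \ {P}. -/
/-!
Since `f(G, P) > 0`, no vertex lies on all three paths, so every vertex of `V(P₁) ∪ V(P₂) ∪ V(P₃)`
lies on one or two of them. Hence twice the size of the union is
`|V(P₁)| + |V(P₂)| + |V(P₃)| = 3 (l(G) + 1)` plus the number `Σ |X_P(P)|` of vertices lying on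
exactly one path, and the union has at most `n` vertices.
-/

open SimpleGraph

noncomputable section

/-- The maximum length (number of edges) of a path in `G`. -/
def maxPathLength {V : Type} (G : SimpleGraph V) : ℕ :=
  sSup {n : ℕ | ∃ (a b : V) (q : G.Walk a b), q.IsPath ∧ q.length = n}

/-- `p` is a longest path of `G`: a path whose length equals `maxPathLength G`. -/
def IsLongestPath {V : Type} (G : SimpleGraph V) {u v : V} (p : G.Walk u v) : Prop :=
  p.IsPath ∧ p.length = maxPathLength G

/-- The vertex set of a walk. -/
def walkVerts {V : Type} {G : SimpleGraph V} {u v : V} (p : G.Walk u v) : Set V :=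
  {x | x ∈ p.support}

/-- The distance `d_G(v, U)` from a vertex `v` to a set `U` of vertices. -/
def distToSet {V : Type} (G : SimpleGraph V) (v : V) (U : Set V) : ℕ :=
  sInf (G.dist v '' U)

/-- A walk bundled together with its endpoints, used to compare paths with
different endpoints for (in)equality. -/
def pathSigma {V : Type} (G : SimpleGraph V) {u v : V} (p : G.Walk u v) :
    Σ a : V, Σ b : V, G.Walk a b := ⟨u, v, p⟩

/-- `f(G, {P₁, P₂}) = min_{v ∈ V(G)} (d_G(v, V(P₁)) + d_G(v, V(P₂)))`. -/
def fTwo {V : Type} (G : SimpleGraph V) {u₁ v₁ u₂ v₂ : V}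
    (p₁ : G.Walk u₁ v₁) (p₂ : G.Walk u₂ v₂) : ℕ :=
  sInf (Set.range fun v : V => distToSet G v (walkVerts p₁) + distToSet G v (walkVerts p₂))

/-- `f(G, {P₁, P₂, P₃}) = min_{v ∈ V(G)} Σᵢ d_G(v, V(Pᵢ))`. -/
def fThree {V : Type} (G : SimpleGraph V) {u₁ v₁ u₂ v₂ u₃ v₃ : V}
    (p₁ : G.Walk u₁ v₁) (p₂ : G.Walk u₂ v₂) (p₃ : G.Walk u₃ v₃) : ℕ :=
  sInf (Set.range fun v : V =>
    distToSet G v (walkVerts p₁) + distToSet G v (walkVerts p₂) + distToSet G v (walkVerts p₃))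

/-- `q` is a subpath of `p` (i.e. a path "on" `p`). -/
def IsSubpath {V : Type} (G : SimpleGraph V) {a b u v : V}
    (q : G.Walk a b) (p : G.Walk u v) : Prop :=
  ∃ (r : G.Walk u a) (s : G.Walk b v), p = r.append (q.append s)

/-- `q` is an `X`-`Y` path: a path meeting `X` exactly in its first end-vertex and
`Y` exactly in its last end-vertex. -/
def IsXYPath {V : Type} (G : SimpleGraph V) (X Y : Set V) {a b : V} (q : G.Walk a b) : Prop :=
  q.IsPath ∧ walkVerts q ∩ X = {a} ∧ walkVerts q ∩ Y = {b}

/-- `tCount G p X Y` is the number of `X`-`Y` paths that are subpaths of `p`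
(counted without regard to orientation). -/
def tCount {V : Type} (G : SimpleGraph V) {u v : V} (p : G.Walk u v) (X Y : Set V) : ℕ :=
  Nat.card {q : Σ a : V, Σ b : V, G.Walk a b //
    IsSubpath G q.2.2 p ∧ (IsXYPath G X Y q.2.2 ∨ IsXYPath G Y X q.2.2)}

theorem Set.ncard_inter_union_of_disjoint {α : Type*} {s t u : Set α} (hs : s.Finite)
    (h : Disjoint (s ∩ t) u) : (s ∩ (t ∪ u)).ncard = (s ∩ t).ncard + (s ∩ u).ncard := by
  rw [Set.inter_union_distrib_left]
  exact Set.ncard_union_eq (h.mono_right Set.inter_subset_right)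
    (hs.subset Set.inter_subset_left) (hs.subset Set.inter_subset_left)

theorem Set.two_mul_ncard_union_of_inter_eq_empty {α : Type*} {s t u : Set α}
    (hs : s.Finite) (ht : t.Finite) (hu : u.Finite) (h : s ∩ t ∩ u = ∅) :
    2 * (s ∪ t ∪ u).ncard = s.ncard + t.ncard + u.ncard +
      (s \ (t ∪ u)).ncard + (t \ (s ∪ u)).ncard + (u \ (s ∪ t)).ncard := by
  have hst : Disjoint (s ∩ t) u := Set.disjoint_iff_inter_eq_empty.2 h
  have hts : Disjoint (t ∩ s) u := by rwa [Set.inter_comm t s]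
  have hus : Disjoint (u ∩ s) t :=
    Set.disjoint_iff_inter_eq_empty.2 (by rwa [Set.inter_comm u, Set.inter_right_comm])
  have hs' := Set.ncard_inter_add_ncard_sdiff_eq_ncard s (t ∪ u) hs
  have ht' := Set.ncard_inter_add_ncard_sdiff_eq_ncard t (s ∪ u) ht
  have hu' := Set.ncard_inter_add_ncard_sdiff_eq_ncard u (s ∪ t) hu
  have hunion₂ := Set.ncard_union_add_ncard_inter s t hs ht
  have hunion₃ := Set.ncard_union_add_ncard_inter (s ∪ t) u (hs.union ht) hu
  rw [Set.ncard_inter_union_of_disjoint hs hst] at hs'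
  rw [Set.ncard_inter_union_of_disjoint ht hts, Set.inter_comm t s] at ht'
  rw [Set.ncard_inter_union_of_disjoint hu hus, Set.inter_comm u s, Set.inter_comm u t] at hu'
  rw [Set.inter_comm, Set.ncard_inter_union_of_disjoint hu hus, Set.inter_comm u s,
    Set.inter_comm u t] at hunion₃
  omega

theorem SimpleGraph.Walk.IsPath.ncard_walkVerts {V : Type} {G : SimpleGraph V} {u v : V}
    {p : G.Walk u v} (hp : p.IsPath) : (walkVerts p).ncard = p.length + 1 := by
  classical
  have : walkVerts p = ↑p.support.toFinset := by ext; simp [walkVerts]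
  rw [this, Set.ncard_coe_finset, List.toFinset_card_of_nodup hp.support_nodup, p.length_support]

theorem distToSet_eq_zero_of_mem {V : Type} (G : SimpleGraph V) {v : V} {U : Set V} (hv : v ∈ U) :
    distToSet G v U = 0 :=
  Nat.sInf_eq_zero.mpr (Or.inl ⟨v, hv, G.dist_self⟩)

theorem fThree_le {V : Type} (G : SimpleGraph V) {u₁ v₁ u₂ v₂ u₃ v₃ : V}
    (p₁ : G.Walk u₁ v₁) (p₂ : G.Walk u₂ v₂) (p₃ : G.Walk u₃ v₃) (v : V) :
    fThree G p₁ p₂ p₃ ≤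
      distToSet G v (walkVerts p₁) + distToSet G v (walkVerts p₂) + distToSet G v (walkVerts p₃) :=
  Nat.sInf_le ⟨v, rfl⟩

theorem walkVerts_inter_eq_empty_of_fThree_pos {V : Type} {G : SimpleGraph V}
    {u₁ v₁ u₂ v₂ u₃ v₃ : V} {p₁ : G.Walk u₁ v₁} {p₂ : G.Walk u₂ v₂} {p₃ : G.Walk u₃ v₃}
    (hf : 0 < fThree G p₁ p₂ p₃) : walkVerts p₁ ∩ walkVerts p₂ ∩ walkVerts p₃ = ∅ := by
  refine Set.eq_empty_of_forall_notMem fun v ⟨⟨hv₁, hv₂⟩, hv₃⟩ => hf.ne' ?_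
  simpa [distToSet_eq_zero_of_mem G hv₁, distToSet_eq_zero_of_mem G hv₂,
    distToSet_eq_zero_of_mem G hv₃] using fThree_le G p₁ p₂ p₃ v

theorem order_lower_bound_general {V : Type} [Fintype V] (G : SimpleGraph V)
    {u₁ v₁ u₂ v₂ u₃ v₃ : V} (p₁ : G.Walk u₁ v₁) (p₂ : G.Walk u₂ v₂) (p₃ : G.Walk u₃ v₃)
    (h₁ : IsLongestPath G p₁) (h₂ : IsLongestPath G p₂) (h₃ : IsLongestPath G p₃)
    (hf : 0 < fThree G p₁ p₂ p₃) :
    (Fintype.card V : ℝ) ≥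
      (3 * maxPathLength G +
        ((walkVerts p₁ \ (walkVerts p₂ ∪ walkVerts p₃)).ncard +
         (walkVerts p₂ \ (walkVerts p₁ ∪ walkVerts p₃)).ncard +
         (walkVerts p₃ \ (walkVerts p₁ ∪ walkVerts p₂)).ncard) + 3) / 2 := by
  have hcount := Set.two_mul_ncard_union_of_inter_eq_empty (Set.toFinite _) (Set.toFinite _)
    (Set.toFinite _) (walkVerts_inter_eq_empty_of_fThree_pos hf)
  rw [h₁.1.ncard_walkVerts, h₂.1.ncard_walkVerts, h₃.1.ncard_walkVerts, h₁.2, h₂.2, h₃.2]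
    at hcount
  have hunion := Set.ncard_le_card (walkVerts p₁ ∪ walkVerts p₂ ∪ walkVerts p₃)
  rw [Nat.card_eq_fintype_card] at hunion
  rw [ge_iff_le, div_le_iff₀ two_pos]
  exact_mod_cast (by omega)

/-- If `f(G, P) > 0` for a set `P` of three longest paths of a finite connected graph
of order `n`, then `n ≥ (3 l(G) + Σ_{P ∈ P} |X_P(P)| + 3) / 2`. -/
theorem order_lower_bound {V : Type} [Fintype V] (G : SimpleGraph V) (hG : G.Connected)
    {u₁ v₁ u₂ v₂ u₃ v₃ : V} (p₁ : G.Walk u₁ v₁) (p₂ : G.Walk u₂ v₂) (p₃ : G.Walk u₃ v₃)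
    (h₁ : IsLongestPath G p₁) (h₂ : IsLongestPath G p₂) (h₃ : IsLongestPath G p₃)
    (hne₁₂ : pathSigma G p₁ ≠ pathSigma G p₂)
    (hne₁₃ : pathSigma G p₁ ≠ pathSigma G p₃)
    (hne₂₃ : pathSigma G p₂ ≠ pathSigma G p₃)
    (hf : 0 < fThree G p₁ p₂ p₃) :
    (Fintype.card V : ℝ) ≥
      (3 * maxPathLength G +
        ((walkVerts p₁ \ (walkVerts p₂ ∪ walkVerts p₃)).ncard +
         (walkVerts p₂ \ (walkVerts p₁ ∪ walkVerts p₃)).ncard +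
         (walkVerts p₃ \ (walkVerts p₁ ∪ walkVerts p₂)).ncard) + 3) / 2 :=
  order_lower_bound_general G p₁ p₂ p₃ h₁ h₂ h₃ hf
end
end

section
/- Let G be a finite connected graph, and let P be a set of three longest paths of G. Then for each P ∈ P, |X_P(P)| ≥ t_P(P)·(f(G,P) − 1), where, writing P \ {P} = {P₁, P₂}, t_P(P) denotes the number of V(P₁)-V(P₂) paths contained in P (subpaths of P meeting V(P₁) in exactly one end-vertex and V(P₂) in exactly the other end-vertex). -/
open SimpleGraph

noncomputable section

/-!
Write `X`, `Y` for the vertex sets of the two paths of `𝒫` other than `P`. Every `X`-`Y`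
subpath `Q` of `P` starts at a vertex `w` of `P`, so its length is at least `d(w, X) + d(w, Y)
= Σ_{P' ∈ 𝒫} d(w, V(P')) ≥ f(G, 𝒫)`, and its `≥ f(G, 𝒫) - 1` inner vertices
lie in `X_𝒫(P)`. Read along `P`, each such `Q` runs between two consecutive visits of `P` to
`X ∪ Y`, so distinct ones have disjoint interiors and the counts add up.
-/

def IsGap (T : Set ℕ) (i j : ℕ) : Prop :=
  i ∈ T ∧ j ∈ T ∧ ∀ k ∈ Set.Ioo i j, k ∉ T

lemma IsGap.eq_of_mem_Ioo {T : Set ℕ} {i j i' j' n : ℕ} (h : IsGap T i j) (h' : IsGap T i' j')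
    (hn : n ∈ Set.Ioo i j) (hn' : n ∈ Set.Ioo i' j') : i = i' ∧ j = j' := by
  obtain ⟨hi, hj, hgap⟩ := h
  obtain ⟨hi', hj', hgap'⟩ := h'
  obtain ⟨hin, hnj⟩ := hn
  obtain ⟨hin', hnj'⟩ := hn'
  constructor
  · rcases lt_trichotomy i i' with h | h | h
    · exact absurd hi' (hgap i' ⟨h, by omega⟩)
    · exact h
    · exact absurd hi (hgap' i ⟨h, by omega⟩)
  · rcases lt_trichotomy j j' with h | h | h
    · exact absurd hj (hgap' j ⟨by omega, h⟩)
    · exact h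
    · exact absurd hj' (hgap j' ⟨by omega, h⟩)

section Subpaths

variable {V : Type} {G : SimpleGraph V}

lemma walkVerts_finite {u v : V} (p : G.Walk u v) : (walkVerts p).Finite :=
  p.support.finite_toSet

lemma sigma_walk_eq_of_getVert_eq {a b a' b' : V} {q : G.Walk a b} {q' : G.Walk a' b'}
    (hl : q.length = q'.length) (h : ∀ k ≤ q.length, q.getVert k = q'.getVert k) :
    (⟨a, b, q⟩ : Σ a b : V, G.Walk a b) = ⟨a', b', q'⟩ := by
  have ha : a = a' := by simpa using h 0 (Nat.zero_le _)
  have hb : b = b' := by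
    have := h q.length le_rfl
    rwa [Walk.getVert_length, hl, Walk.getVert_length] at this
  subst ha hb
  rw [Walk.ext_getVert_le_length hl h]

lemma IsSubpath.exists_offset {a b u v : V} {q : G.Walk a b} {p : G.Walk u v}
    (h : IsSubpath G q p) :
    ∃ i, i + q.length ≤ p.length ∧ ∀ k ≤ q.length, p.getVert (i + k) = q.getVert k := by
  obtain ⟨r, s, rfl⟩ := h
  refine ⟨r.length, by simp only [Walk.length_append]; omega, fun k hk => ?_⟩
  rw [Walk.getVert_append, if_neg (by omega), Nat.add_sub_cancel_left, Walk.getVert_append',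
    if_pos hk]

def MeetsExactlyAtEnds (S : Set V) {a b : V} (q : G.Walk a b) : Prop :=
  a ∈ S ∧ b ∈ S ∧ ∀ k, 0 < k → k < q.length → q.getVert k ∉ S

lemma MeetsExactlyAtEnds.isGap_of_getVert_add {S : Set V} {a b u v : V} {q : G.Walk a b}
    {p : G.Walk u v} (hq : MeetsExactlyAtEnds S q) {i : ℕ}
    (hi : ∀ k ≤ q.length, p.getVert (i + k) = q.getVert k) :
    IsGap {n | p.getVert n ∈ S} i (i + q.length) := by
  refine ⟨?_, ?_, ?_⟩
  · change p.getVert i ∈ S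
    rw [← add_zero i, hi 0 (Nat.zero_le _), Walk.getVert_zero]
    exact hq.1
  · change p.getVert (i + q.length) ∈ S
    rw [hi _ le_rfl, Walk.getVert_length]
    exact hq.2.1
  · rintro n ⟨h₁, h₂⟩
    change p.getVert n ∉ S
    rw [← Nat.add_sub_cancel' h₁.le, hi _ (by omega)]
    exact hq.2.2 _ (by omega) (by omega)

theorem natCard_subpaths_mul_le_ncard_diff {u v : V} {p : G.Walk u v} (hp : p.IsPath) {S : Set V} {m : ℕ}
    {Q : (Σ a b : V, G.Walk a b) → Prop}
    (hQ : ∀ q, Q q → IsSubpath G q.2.2 p ∧ MeetsExactlyAtEnds S q.2.2 ∧ m < q.2.2.length) :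
    Nat.card {q // Q q} * m ≤ (walkVerts p \ S).ncard := by
  choose off hoff_le hoff using fun q : {q // Q q} => (hQ q.1 q.2).1.exists_offset
  have hlen (q : {q // Q q}) : m < q.1.2.2.length := (hQ q.1 q.2).2.2
  have hgap (q : {q // Q q}) := (hQ q.1 q.2).2.1.isGap_of_getVert_add (hoff q)
  have hmem (x : {q // Q q} × Fin m) : p.getVert (off x.1 + (x.2 + 1)) ∈ walkVerts p \ S :=
    ⟨p.getVert_mem_support _, (hgap x.1).2.2 _ ⟨by omega, by have := hlen x.1; omega⟩⟩
  have hle (x : {q // Q q} × Fin m) : off x.1 + (x.2 + 1) ∈ {n | n ≤ p.length} := by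
    have := hlen x.1
    have := hoff_le x.1
    rw [Set.mem_ofPred_eq]
    omega
  have hinj : Function.Injective fun x => (⟨_, hmem x⟩ : ↥(walkVerts p \ S)) := by
    rintro ⟨q, k⟩ ⟨q', k'⟩ hqq'
    have hpos : off q + (k + 1) = off q' + (k' + 1) :=
      hp.getVert_injOn (hle (q, k)) (hle (q', k')) (congrArg Subtype.val hqq')
    obtain ⟨hi, hj⟩ := (hgap q).eq_of_mem_Ioo (hgap q') (n := off q + (k + 1))
      ⟨by omega, by have := hlen q; omega⟩ ⟨by omega, by have := hlen q'; omega⟩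
    have hl : q.1.2.2.length = q'.1.2.2.length := by omega
    have hq : q = q' := Subtype.ext <| sigma_walk_eq_of_getVert_eq hl fun i hi' => by
      rw [← hoff q i hi', ← hoff q' i (hl ▸ hi'), hi]
    subst hq
    simp only [Prod.mk.injEq, true_and]
    exact Fin.ext (by omega)
  have : Finite ↥(walkVerts p \ S) := ((walkVerts_finite p).subset Set.sdiff_subset).to_subtype
  calc Nat.card {q // Q q} * m = Nat.card ({q // Q q} × Fin m) := by simp
    _ ≤ Nat.card ↥(walkVerts p \ S) := Nat.card_le_card_of_injective _ hinj
    _ = (walkVerts p \ S).ncard := Nat.card_coe_set_eq _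

section XYPath

variable {X Y : Set V} {a b : V} {q : G.Walk a b}

lemma IsXYPath.start_mem (h : IsXYPath G X Y q) : a ∈ X :=
  (h.2.1.symm ▸ Set.mem_singleton a : a ∈ walkVerts q ∩ X).2

lemma IsXYPath.end_mem (h : IsXYPath G X Y q) : b ∈ Y :=
  (h.2.2.symm ▸ Set.mem_singleton b : b ∈ walkVerts q ∩ Y).2

lemma IsXYPath.meetsExactlyAtEnds (h : IsXYPath G X Y q) : MeetsExactlyAtEnds (X ∪ Y) q := by
  refine ⟨Or.inl h.start_mem, Or.inr h.end_mem, fun k hk₀ hk hkXY => ?_⟩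
  have hinj := h.1.getVert_injOn
  have hmem : q.getVert k ∈ walkVerts q := q.getVert_mem_support k
  rcases hkXY with hkX | hkY
  · have : q.getVert k ∈ walkVerts q ∩ X := ⟨hmem, hkX⟩
    rw [h.2.1, Set.mem_singleton_iff] at this
    exact hk₀.ne' (hinj (Set.mem_ofPred_eq ▸ hk.le) (Set.mem_ofPred_eq ▸ Nat.zero_le _)
      (this.trans q.getVert_zero.symm))
  · have : q.getVert k ∈ walkVerts q ∩ Y := ⟨hmem, hkY⟩
    rw [h.2.2, Set.mem_singleton_iff] at this
    exact hk.ne (hinj (Set.mem_ofPred_eq ▸ hk.le) (Set.mem_ofPred_eq ▸ le_rfl)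
      (this.trans q.getVert_length.symm))

lemma distToSet_eq_zero {v : V} {U : Set V} (h : v ∈ U) : distToSet G v U = 0 :=
  Nat.eq_zero_of_le_zero (Nat.sInf_le ⟨v, h, dist_self⟩)

lemma distToSet_le_dist (v : V) {U : Set V} {w : V} (h : w ∈ U) :
    distToSet G v U ≤ G.dist v w :=
  Nat.sInf_le ⟨w, h, rfl⟩

lemma IsXYPath.distToSet_add_distToSet_le_length (h : IsXYPath G X Y q) :
    distToSet G a X + distToSet G a Y ≤ q.length := by
  rw [distToSet_eq_zero h.start_mem, zero_add]
  exact (distToSet_le_dist a h.end_mem).trans (dist_le q)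

end XYPath

theorem tCount_mul_le_ncard_diff {u v : V} {p : G.Walk u v} (hp : p.IsPath) {X Y : Set V}
    {f : ℕ} (hf : ∀ w ∈ walkVerts p, f ≤ distToSet G w X + distToSet G w Y) :
    (tCount G p X Y : ℤ) * ((f : ℤ) - 1) ≤ ((walkVerts p \ (X ∪ Y)).ncard : ℤ) := by
  rcases Nat.eq_zero_or_pos f with rfl | hf₀
  · simp
  have hcount : tCount G p X Y * (f - 1) ≤ (walkVerts p \ (X ∪ Y)).ncard := by
    refine natCard_subpaths_mul_le_ncard_diff hp ?_
    rintro ⟨a, b, q⟩ ⟨hsub, hXY⟩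
    dsimp only at hsub hXY ⊢
    refine ⟨hsub, ?_⟩
    obtain ⟨r, s, rfl⟩ := hsub
    have hfa := hf a (by simp [walkVerts])
    rcases hXY with hXY | hYX
    · exact ⟨hXY.meetsExactlyAtEnds, by have := hXY.distToSet_add_distToSet_le_length; omega⟩
    · exact ⟨Set.union_comm Y X ▸ hYX.meetsExactlyAtEnds,
        by have := hYX.distToSet_add_distToSet_le_length; omega⟩
  have : ((f - 1 : ℕ) : ℤ) = (f : ℤ) - 1 := by omega
  rw [← this]
  exact_mod_cast hcount

section fThree

variable {u₁ v₁ u₂ v₂ u₃ v₃ : V} (p₁ : G.Walk u₁ v₁) (p₂ : G.Walk u₂ v₂) (p₃ : G.Walk u₃ v₃)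

lemma fThree_comm : fThree G p₁ p₂ p₃ = fThree G p₂ p₁ p₃ := by
  simp only [fThree, add_comm (distToSet G _ (walkVerts p₁))]

lemma fThree_rotate : fThree G p₁ p₂ p₃ = fThree G p₃ p₁ p₂ := by
  simp only [fThree, add_comm _ (distToSet G _ (walkVerts p₃)), add_assoc]

lemma fThree_le_distToSet_add_distToSet {w : V} (hw : w ∈ walkVerts p₁) :
    fThree G p₁ p₂ p₃ ≤ distToSet G w (walkVerts p₂) + distToSet G w (walkVerts p₃) := by
  have := Nat.sInf_le (Set.mem_range_self (f := fun v : V => distToSet G v (walkVerts p₁) +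
    distToSet G v (walkVerts p₂) + distToSet G v (walkVerts p₃)) w)
  rwa [distToSet_eq_zero hw, zero_add] at this

end fThree

end Subpaths

theorem X_card_lower_bound_general {V : Type} (G : SimpleGraph V)
    {u₁ v₁ u₂ v₂ u₃ v₃ : V} (p₁ : G.Walk u₁ v₁) (p₂ : G.Walk u₂ v₂) (p₃ : G.Walk u₃ v₃)
    (h₁ : IsLongestPath G p₁) (h₂ : IsLongestPath G p₂) (h₃ : IsLongestPath G p₃) :
    ((walkVerts p₁ \ (walkVerts p₂ ∪ walkVerts p₃)).ncard : ℤ) ≥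
        (tCount G p₁ (walkVerts p₂) (walkVerts p₃) : ℤ) * ((fThree G p₁ p₂ p₃ : ℤ) - 1) ∧
    ((walkVerts p₂ \ (walkVerts p₁ ∪ walkVerts p₃)).ncard : ℤ) ≥
        (tCount G p₂ (walkVerts p₁) (walkVerts p₃) : ℤ) * ((fThree G p₁ p₂ p₃ : ℤ) - 1) ∧
    ((walkVerts p₃ \ (walkVerts p₁ ∪ walkVerts p₂)).ncard : ℤ) ≥
        (tCount G p₃ (walkVerts p₁) (walkVerts p₂) : ℤ) * ((fThree G p₁ p₂ p₃ : ℤ) - 1) := by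
  refine ⟨tCount_mul_le_ncard_diff h₁.1 fun w hw => fThree_le_distToSet_add_distToSet p₁ p₂ p₃ hw,
    ?_, ?_⟩
  · rw [fThree_comm]
    exact tCount_mul_le_ncard_diff h₂.1 fun w hw => fThree_le_distToSet_add_distToSet p₂ p₁ p₃ hw
  · rw [fThree_rotate]
    exact tCount_mul_le_ncard_diff h₃.1 fun w hw => fThree_le_distToSet_add_distToSet p₃ p₁ p₂ hw

/-- For each path `P` in a set `P` of three longest paths of a finite connected graph,
`|X_P(P)| ≥ t_P(P) · (f(G, P) − 1)`. -/
theorem X_card_lower_bound {V : Type} [Fintype V] (G : SimpleGraph V) (hG : G.Connected)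
    {u₁ v₁ u₂ v₂ u₃ v₃ : V} (p₁ : G.Walk u₁ v₁) (p₂ : G.Walk u₂ v₂) (p₃ : G.Walk u₃ v₃)
    (h₁ : IsLongestPath G p₁) (h₂ : IsLongestPath G p₂) (h₃ : IsLongestPath G p₃)
    (hne₁₂ : pathSigma G p₁ ≠ pathSigma G p₂)
    (hne₁₃ : pathSigma G p₁ ≠ pathSigma G p₃)
    (hne₂₃ : pathSigma G p₂ ≠ pathSigma G p₃) :
    ((walkVerts p₁ \ (walkVerts p₂ ∪ walkVerts p₃)).ncard : ℤ) ≥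
        (tCount G p₁ (walkVerts p₂) (walkVerts p₃) : ℤ) * ((fThree G p₁ p₂ p₃ : ℤ) - 1) ∧
    ((walkVerts p₂ \ (walkVerts p₁ ∪ walkVerts p₃)).ncard : ℤ) ≥
        (tCount G p₂ (walkVerts p₁) (walkVerts p₃) : ℤ) * ((fThree G p₁ p₂ p₃ : ℤ) - 1) ∧
    ((walkVerts p₃ \ (walkVerts p₁ ∪ walkVerts p₂)).ncard : ℤ) ≥
        (tCount G p₃ (walkVerts p₁) (walkVerts p₂) : ℤ) * ((fThree G p₁ p₂ p₃ : ℤ) - 1) :=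
  X_card_lower_bound_general G p₁ p₂ p₃ h₁ h₂ h₃

end
end

section
/- The following two statements are equivalent: (i) for every finite connected graph G and every set P of three longest paths of G, f(G,P) = 0; (ii) there exists a sublinear non-decreasing function g : ℕ → ℝ (i.e., g(n)/n → 0 as n → ∞ and g is monotone non-decreasing) such that for every finite connected graph G of order n and every set P of three longest paths of G, f(G,P) ≤ g(n). -/
open SimpleGraph

noncomputable section

/-!
(i) gives (ii) with `g = 0`. Conversely, suppose three distinct longest paths of `G` have
`f(G, P) = k ≥ 1`. Replace each edge of `G` by paths with `m + 1` inner vertices and hang a path of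
`m + 1` new vertices at every vertex. In a path of the new graph, consecutive original vertices are
joined through a single subdivided edge, so they form a path of `G`, and each end adds at most
`m + 1` steps. Hence the longest paths have length `(m + 2) l(G) + 2 (m + 1)`, and the three paths
of `G`, stretched and extended by pendant paths at both ends, stay distinct longest paths.
Distances to them are at least `m + 2` times distances in `G`, interpolated along lanes, so their
`f` is at least `(m + 2) k`, while the new graph has `O(m)` vertices: `f` grows linearly in the
order, contradicting (ii).
-/

section Walks

variable {V : Type} {G : SimpleGraph V}

theorem SimpleGraph.Walk.IsPath.append {u v w : V}
    {p : G.Walk u v} {q : G.Walk v w} (hp : p.IsPath) (hq : q.IsPath)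
    (h : ∀ x ∈ p.support, x ∈ q.support → x = v) : (p.append q).IsPath := by
  rw [Walk.isPath_def, Walk.support_append, List.nodup_append]
  have hq' := hq.support_nodup
  rw [← q.cons_tail_support, List.nodup_cons] at hq'
  refine ⟨hp.support_nodup, hq'.2, fun x hx y hy hxy => ?_⟩
  subst hxy
  obtain rfl := h x hx (List.mem_of_mem_tail hy)
  exact hq'.1 hy

theorem SimpleGraph.Walk.exists_eq_append_cons (P : V → Prop)
    {x y : V} (W : G.Walk x y) (hx : ¬ P x) (h : ∃ z ∈ W.support, P z) :
    ∃ (x' z : V) (W₁ : G.Walk x x') (hz : G.Adj x' z) (W₂ : G.Walk z y),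
      P z ∧ (∀ v ∈ W₁.support, ¬ P v) ∧ W = W₁.append (W₂.cons hz) := by
  induction W with
  | nil =>
    obtain ⟨z, hz, hPz⟩ := h
    rw [Walk.support_nil, List.mem_singleton] at hz
    exact (hx (hz ▸ hPz)).elim
  | @cons x x'' y hadj W' ih =>
    by_cases hx'' : P x''
    · exact ⟨x, x'', .nil, hadj, W', hx'', by simpa using hx, rfl⟩
    · obtain ⟨z, hz, hPz⟩ := h
      have hz' : z ∈ W'.support :=
        (List.mem_cons.mp hz).resolve_left fun hzx => hx (hzx ▸ hPz)
      obtain ⟨x', z', W₁, hadj', W₂, hPz', hW₁, rfl⟩ := ih hx'' ⟨z, hz', hPz⟩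
      refine ⟨x', z', W₁.cons hadj, hadj', W₂, hPz', ?_, rfl⟩
      simpa [hx] using hW₁

theorem SimpleGraph.Walk.IsPath.length_le_maxPathLength [Fintype V]
    {a b : V} {p : G.Walk a b} (hp : p.IsPath) : p.length ≤ maxPathLength G :=
  le_csSup ⟨Fintype.card V, by rintro _ ⟨_, _, q, hq, rfl⟩; exact hq.length_lt.le⟩
    ⟨a, b, p, hp, rfl⟩

theorem pathSigma_eq_of_support_eq {u v u' v' : V}
    {p : G.Walk u v} {q : G.Walk u' v'} (h : p.support = q.support) :
    pathSigma G p = pathSigma G q := by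
  have start_eq : ∀ {x y x' y' : V} (r : G.Walk x y) (s : G.Walk x' y'),
      r.support = s.support → x = x' := by
    intro x y x' y' r s h
    rw [← r.cons_tail_support, ← s.cons_tail_support] at h
    exact (List.cons.inj h).1
  obtain rfl := start_eq p q h
  obtain rfl := start_eq p.reverse q.reverse (by simp [h])
  rw [Walk.ext_support h]

theorem IsLongestPath.ne {a b : V} {p : G.Walk a b}
    (hp : IsLongestPath G p) (h : maxPathLength G ≠ 0) : a ≠ b := by
  rintro rfl
  exact h (hp.2 ▸ (Walk.isPath_iff_nil.mp hp.1).length_eq_zero)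

end Walks

section Distance

variable {α : Type} {H : SimpleGraph α} {U : Set α}

theorem distToSet_eq_zero_of_mem_s10 {x : α} (hx : x ∈ U) : distToSet H x U = 0 :=
  Nat.sInf_eq_zero.mpr (.inl ⟨x, hx, dist_self⟩)

theorem distToSet_le_add_one_of_adj (hH : H.Connected) (hU : U.Nonempty) {x y : α}
    (h : H.Adj x y) : distToSet H x U ≤ distToSet H y U + 1 := by
  obtain ⟨t, ht, hdt⟩ := Nat.sInf_mem (hU.image (H.dist y))
  calc distToSet H x U ≤ H.dist x t := Nat.sInf_le ⟨t, ht, rfl⟩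
    _ ≤ H.dist x y + H.dist y t := hH.dist_triangle
    _ = distToSet H y U + 1 := by rw [dist_eq_one_iff_adj.mpr h, distToSet, ← hdt, add_comm]

theorem le_distToSet_of_lipschitz (hH : H.Connected) (hU : U.Nonempty) {f : α → ℕ}
    (hf : ∀ x y, H.Adj x y → f x ≤ f y + 1) (hfU : ∀ x ∈ U, f x = 0) (x : α) :
    f x ≤ distToSet H x U := by
  have walk_bound : ∀ {x t : α} (p : H.Walk x t), f x ≤ f t + p.length := by
    intro x t p
    induction p with
    | nil => simp
    | cons h _ ih => have := hf _ _ h; simp only [Walk.length_cons]; omega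
  refine le_csInf (hU.image _) ?_
  rintro _ ⟨t, ht, rfl⟩
  obtain ⟨p, hp⟩ := hH.exists_walk_length_eq_dist x t
  simpa [hfU t ht, hp] using walk_bound p

theorem le_fThree [Nonempty α] {k : ℕ} {u₁ v₁ u₂ v₂ u₃ v₃ : α}
    {q₁ : H.Walk u₁ v₁} {q₂ : H.Walk u₂ v₂} {q₃ : H.Walk u₃ v₃}
    (h : ∀ z, k ≤ distToSet H z (walkVerts q₁) + distToSet H z (walkVerts q₂) +
      distToSet H z (walkVerts q₃)) : k ≤ fThree H q₁ q₂ q₃ :=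
  le_csInf (Set.range_nonempty _) (by rintro _ ⟨z, rfl⟩; exact h z)

theorem fThree_le_s10 {u₁ v₁ u₂ v₂ u₃ v₃ : α}
    (q₁ : H.Walk u₁ v₁) (q₂ : H.Walk u₂ v₂) (q₃ : H.Walk u₃ v₃) (z : α) :
    fThree H q₁ q₂ q₃ ≤ distToSet H z (walkVerts q₁) + distToSet H z (walkVerts q₂) +
      distToSet H z (walkVerts q₃) :=
  Nat.sInf_le ⟨z, rfl⟩

theorem fThree_eq_zero_of_maxPathLength_eq_zero [Fintype α]
    (hH : H.Connected) (h : maxPathLength H = 0) {u₁ v₁ u₂ v₂ u₃ v₃ : α}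
    (p₁ : H.Walk u₁ v₁) (p₂ : H.Walk u₂ v₂) (p₃ : H.Walk u₃ v₃) : fThree H p₁ p₂ p₃ = 0 := by
  have eq_u₁ : ∀ x, x = u₁ := fun x => by
    obtain ⟨q, hq⟩ := hH.exists_isPath x u₁
    exact Walk.eq_of_length_eq_zero (by simpa [h] using hq.length_le_maxPathLength)
  have hd : ∀ {a b : α} (p : H.Walk a b), distToSet H u₁ (walkVerts p) = 0 := fun {a _} p => by
    obtain rfl := eq_u₁ a
    exact distToSet_eq_zero_of_mem_s10 p.start_mem_support
  simpa [hd] using fThree_le_s10 p₁ p₂ p₃ u₁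

end Distance

theorem nonpos_of_mul_le_of_sublinear {g : ℕ → ℝ}
    (hg : Filter.Tendsto (fun n : ℕ => g n / n) Filter.atTop (nhds 0)) {C : ℕ} (hC : 0 < C)
    {c : ℝ} (h : ∀ m : ℕ, ((m : ℝ) + 2) * c ≤ g (C * (m + 2))) : c ≤ 0 := by
  have hC' : (0 : ℝ) < C := by exact_mod_cast hC
  have hφ : Filter.Tendsto (fun m : ℕ => C * (m + 2)) Filter.atTop Filter.atTop :=
    Filter.tendsto_atTop_mono (fun m => show m ≤ C * (m + 2) by nlinarith) Filter.tendsto_id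
  have hbound : ∀ m : ℕ, c / C ≤ g (C * (m + 2)) / ((C * (m + 2) : ℕ) : ℝ) := fun m => by
    rw [div_le_div_iff₀ hC' (by positivity)]
    push_cast
    nlinarith [h m]
  have := ge_of_tendsto (hg.comp hφ) (Filter.Eventually.of_forall hbound)
  simpa using (div_le_iff₀ hC').mp this

namespace LaneGraph

variable {V : Type} (G : SimpleGraph V) (m : ℕ)

/-- `.inr (u, w, j)` is the `j`-th vertex of a lane of `m + 1` new vertices hanging from `u` for
every ordered pair `(u, w)`; its far end is joined to `w` exactly when `G.Adj u w`. So each edge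
is subdivided twice, once per orientation, and every vertex `u` carries pendant lanes, such as
`(u, u)`. -/
inductive Step : V ⊕ V × V × Fin (m + 1) → V ⊕ V × V × Fin (m + 1) → Prop
  | enter (u w : V) : Step (.inl u) (.inr (u, w, 0))
  | next (u w : V) (i : Fin m) : Step (.inr (u, w, i.castSucc)) (.inr (u, w, i.succ))
  | exit {u w : V} (h : G.Adj u w) : Step (.inr (u, w, Fin.last m)) (.inl w)

variable {G m}

lemma Step.ne {x y : V ⊕ V × V × Fin (m + 1)} (h : Step G m x y) : x ≠ y := by
  cases h <;> simp [Fin.castSucc_lt_succ.ne]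

variable (G m)

def laneGraph : SimpleGraph (V ⊕ V × V × Fin (m + 1)) where
  Adj x y := Step G m x y ∨ Step G m y x
  symm := ⟨fun _ _ => Or.symm⟩
  loopless := ⟨fun _ h => h.elim (·.ne rfl) (·.ne rfl)⟩

variable {G m}

lemma adj_enter (u w : V) : (laneGraph G m).Adj (.inl u) (.inr (u, w, 0)) := .inl (.enter u w)

lemma adj_next (u w : V) (i : Fin m) :
    (laneGraph G m).Adj (.inr (u, w, i.castSucc)) (.inr (u, w, i.succ)) := .inl (.next u w i)

lemma adj_exit {u w : V} (h : G.Adj u w) :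
    (laneGraph G m).Adj (.inr (u, w, Fin.last m)) (.inl w) := .inl (.exit h)

variable (G m) in
def laneWalk (u w : V) (j : Fin (m + 1)) : (laneGraph G m).Walk (.inl u) (.inr (u, w, j)) :=
  Fin.induction (motive := fun j => (laneGraph G m).Walk (.inl u) (.inr (u, w, j)))
    (adj_enter u w).toWalk (fun i W => W.concat (adj_next u w i)) j

lemma laneWalk_zero (u w : V) :
    laneWalk G m u w 0 = (adj_enter u w).toWalk := rfl

lemma laneWalk_succ (u w : V) (i : Fin m) :
    laneWalk G m u w i.succ = (laneWalk G m u w i.castSucc).concat (adj_next u w i) :=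
  Fin.induction_succ ..

@[simp] lemma length_laneWalk (u w : V) (j : Fin (m + 1)) :
    (laneWalk G m u w j).length = j + 1 := by
  induction j using Fin.induction with
  | zero => rfl
  | succ i ih => simp [laneWalk_succ, ih]

lemma mem_support_laneWalk {u w : V} {j : Fin (m + 1)} {z : V ⊕ V × V × Fin (m + 1)}
    (hz : z ∈ (laneWalk G m u w j).support) : z = .inl u ∨ ∃ i ≤ j, z = .inr (u, w, i) := by
  induction j using Fin.induction with
  | zero => simpa [laneWalk_zero, or_comm, eq_comm] using hz
  | succ i ih =>
    rw [laneWalk_succ, Walk.support_concat, List.mem_append,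
      List.mem_singleton] at hz
    rcases hz with hz | rfl
    · rcases ih hz with rfl | ⟨k, hk, rfl⟩
      · exact .inl rfl
      · exact .inr ⟨k, hk.trans Fin.castSucc_lt_succ.le, rfl⟩
    · exact .inr ⟨_, le_rfl, rfl⟩

lemma isPath_laneWalk (u w : V) (j : Fin (m + 1)) : (laneWalk G m u w j).IsPath := by
  induction j using Fin.induction with
  | zero => simp [laneWalk_zero]
  | succ i ih =>
    rw [laneWalk_succ]
    refine ih.concat (fun hz => ?_) _
    rcases mem_support_laneWalk hz with h | ⟨k, hk, h⟩
    · simp at h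
    · simp only [Sum.inr.injEq, Prod.mk.injEq, true_and] at h
      exact (h ▸ Fin.castSucc_lt_succ).not_ge hk

@[simp] lemma filterMap_support_laneWalk (u w : V) (j : Fin (m + 1)) :
    (laneWalk G m u w j).support.filterMap Sum.getLeft? = [u] := by
  induction j using Fin.induction with
  | zero => simp [laneWalk_zero]
  | succ i ih => simp [laneWalk_succ, ih]

variable (G m) in
def liftWalk : {a b : V} → G.Walk a b → (laneGraph G m).Walk (.inl a) (.inr (b, b, Fin.last m))
  | _, b, .nil => laneWalk G m b b (Fin.last m)
  | _, _, .cons h q => (laneWalk G m _ _ (Fin.last m)).append ((liftWalk q).cons (adj_exit h))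

variable (G m) in
def liftPath {a b : V} (p : G.Walk a b) :
    (laneGraph G m).Walk (.inr (a, a, Fin.last m)) (.inr (b, b, Fin.last m)) :=
  (laneWalk G m a a (Fin.last m)).reverse.append (liftWalk G m p)

lemma support_liftWalk_cons {u w b : V} (h : G.Adj u w) (q : G.Walk w b) :
    (liftWalk G m (q.cons h)).support =
      (laneWalk G m u w (Fin.last m)).support ++ (liftWalk G m q).support := by
  simp [liftWalk, Walk.support_append]

lemma length_liftWalk {a b : V} (p : G.Walk a b) :
    (liftWalk G m p).length = (m + 2) * p.length + (m + 1) := by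
  induction p with
  | nil => simp [liftWalk]
  | cons h q ih => simp only [liftWalk, Walk.length_append, Walk.length_cons, ih,
      length_laneWalk, Fin.val_last]; ring

lemma length_liftPath {a b : V} (p : G.Walk a b) :
    (liftPath G m p).length = (m + 2) * p.length + 2 * (m + 1) := by
  simp only [liftPath, Walk.length_append, Walk.length_reverse, length_laneWalk, Fin.val_last,
    length_liftWalk]
  ring

lemma mem_support_liftWalk_inl {a b v : V} {p : G.Walk a b}
    (hv : .inl v ∈ (liftWalk G m p).support) : v ∈ p.support := by
  induction p with
  | nil => simpa [liftWalk] using mem_support_laneWalk hv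
  | cons h q ih =>
    rw [support_liftWalk_cons, List.mem_append] at hv
    rcases hv with hv | hv
    · obtain rfl : v = _ := by simpa using mem_support_laneWalk hv
      exact Walk.start_mem_support _
    · exact List.mem_cons_of_mem _ (ih hv)

lemma mem_support_liftWalk_inr {a b u w : V} {i : Fin (m + 1)} {p : G.Walk a b}
    (hz : .inr (u, w, i) ∈ (liftWalk G m p).support) :
    u ∈ p.support ∧ w ∈ p.support ∧ (u = w → u = b) := by
  induction p with
  | nil =>
    obtain ⟨-, rfl, rfl⟩ : _ ∧ _ ∧ _ := by simpa [liftWalk] using mem_support_laneWalk hz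
    simp
  | cons h q ih =>
    rw [support_liftWalk_cons, List.mem_append] at hz
    rcases hz with hz | hz
    · obtain ⟨-, rfl, rfl⟩ : _ ∧ _ ∧ _ := by simpa using mem_support_laneWalk hz
      exact ⟨q.support.mem_cons_self .., List.mem_cons_of_mem _ q.start_mem_support,
        fun e => absurd e h.ne⟩
    · obtain ⟨hu, hw, he⟩ := ih hz
      exact ⟨List.mem_cons_of_mem _ hu, List.mem_cons_of_mem _ hw, he⟩

lemma isPath_liftWalk {a b : V} {p : G.Walk a b} (hp : p.IsPath) : (liftWalk G m p).IsPath := by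
  induction p with
  | nil => exact isPath_laneWalk ..
  | @cons u w b h q ih =>
    rw [Walk.cons_isPath_iff] at hp
    have hlane : ∀ {w' i}, .inr (u, w', i) ∉ (liftWalk G m q).support :=
      fun hz => hp.2 (mem_support_liftWalk_inr hz).1
    refine (isPath_laneWalk ..).append ((ih hp.1).cons hlane) fun x hx hx' => ?_
    simp only [Walk.support_cons, List.mem_cons] at hx'
    rcases mem_support_laneWalk hx with rfl | ⟨i, -, rfl⟩
    · exact absurd (mem_support_liftWalk_inl (by simpa using hx')) hp.2
    · exact hx'.resolve_right hlane

lemma isPath_liftPath {a b : V} {p : G.Walk a b} (hp : p.IsPath) (hab : a ≠ b) :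
    (liftPath G m p).IsPath := by
  refine (isPath_laneWalk ..).reverse.append (isPath_liftWalk hp) fun x hx hx' => ?_
  rw [Walk.support_reverse, List.mem_reverse] at hx
  rcases mem_support_laneWalk hx with rfl | ⟨i, -, rfl⟩
  · rfl
  · exact absurd ((mem_support_liftWalk_inr hx').2.2 rfl) hab

lemma filterMap_support_liftWalk {a b : V} (p : G.Walk a b) :
    (liftWalk G m p).support.filterMap Sum.getLeft? = p.support := by
  induction p with
  | nil => simp [liftWalk]
  | cons h q ih => simp [support_liftWalk_cons, ih]

lemma filterMap_support_liftPath {a b : V} (p : G.Walk a b) :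
    (liftPath G m p).support.filterMap Sum.getLeft? = p.support := by
  have h := filterMap_support_liftWalk (G := G) (m := m) p
  rw [← (liftWalk G m p).cons_tail_support, List.filterMap_cons, Sum.getLeft?_inl] at h
  simpa [liftPath, Walk.support_append, List.filterMap_append, List.filterMap_reverse] using h

lemma pathSigma_eq_of_liftPath {a b a' b' : V} {p : G.Walk a b} {q : G.Walk a' b'}
    (h : pathSigma (laneGraph G m) (liftPath G m p) = pathSigma (laneGraph G m) (liftPath G m q)) :
    pathSigma G p = pathSigma G q :=
  pathSigma_eq_of_support_eq <| by
    simpa [pathSigma, filterMap_support_liftPath] using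
      congrArg (fun s : Σ x y, (laneGraph G m).Walk x y => s.2.2.support.filterMap Sum.getLeft?) h

lemma connected_laneGraph (hG : G.Connected) : (laneGraph G m).Connected := by
  have reach_inl : ∀ z, ∃ v, (laneGraph G m).Reachable (.inl v) z := by
    rintro (v | ⟨u, w, j⟩)
    · exact ⟨v, .refl _⟩
    · exact ⟨u, (laneWalk G m u w j).reachable⟩
  have : Nonempty (V ⊕ V × V × Fin (m + 1)) := ⟨.inl hG.nonempty.some⟩
  refine ⟨fun x y => ?_⟩
  obtain ⟨u, hu⟩ := reach_inl x
  obtain ⟨v, hv⟩ := reach_inl y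
  obtain ⟨q⟩ := hG.preconnected u v
  exact hu.symm.trans <| (liftWalk G m q).reachable.trans <|
    (laneWalk G m v v (Fin.last m)).reachable.symm.trans hv

lemma not_adj_inl_inl {u v : V} : ¬ (laneGraph G m).Adj (.inl u) (.inl v) := by
  rintro (h | h) <;> cases h

lemma eq_of_adj_inr_inl {u w x : V} {j : Fin (m + 1)}
    (h : (laneGraph G m).Adj (.inr (u, w, j)) (.inl x)) : x = u ∨ x = w ∧ G.Adj u w := by
  rcases h with h | h <;> cases h
  · exact .inr ⟨rfl, ‹_›⟩
  · exact .inl rfl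

lemma eq_of_adj_inr_inr {u w u' w' : V} {i j : Fin (m + 1)}
    (h : (laneGraph G m).Adj (.inr (u, w, i)) (.inr (u', w', j))) : u' = u ∧ w' = w := by
  rcases h with h | h <;> cases h <;> exact ⟨rfl, rfl⟩

lemma adj_of_adj_inl_of_adj_inl {u x u' w' : V} {i j : Fin (m + 1)}
    (h₁ : (laneGraph G m).Adj (.inl u) (.inr (u', w', i)))
    (h₂ : (laneGraph G m).Adj (.inr (u', w', j)) (.inl x)) (hux : u ≠ x) : G.Adj u x := by
  rcases eq_of_adj_inr_inl h₁.symm with rfl | ⟨rfl, h⟩ <;>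
    rcases eq_of_adj_inr_inl h₂ with rfl | ⟨rfl, h'⟩
  exacts [absurd rfl hux, h', h.symm, absurd rfl hux]

lemma mem_lane_of_forall_not_inl {x y} (W : (laneGraph G m).Walk x y)
    (hW : ∀ v, .inl v ∉ W.support) {u w : V} {j : Fin (m + 1)} (hx : x = .inr (u, w, j)) :
    ∀ z ∈ W.support, ∃ i, z = .inr (u, w, i) := by
  induction W generalizing j with
  | nil => simpa using ⟨j, hx⟩
  | @cons x x' y h W' ih =>
    subst hx
    simp only [Walk.support_cons, List.mem_cons, forall_eq_or_imp]
    refine ⟨⟨j, rfl⟩, ?_⟩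
    rcases x' with v | ⟨u', w', j'⟩
    · exact absurd (by simp) (hW v)
    · obtain ⟨rfl, rfl⟩ := eq_of_adj_inr_inr h
      exact ih (fun v hv => hW v (List.mem_cons_of_mem _ hv)) rfl

lemma length_le_of_forall_not_inl {x y} {W : (laneGraph G m).Walk x y} (hp : W.IsPath)
    (hW : ∀ v, .inl v ∉ W.support) : W.length ≤ m := by
  classical
  rcases x with v | ⟨u, w, j⟩
  · exact absurd W.start_mem_support (hW v)
  have hsub : W.support.toFinset ⊆ Finset.univ.image (fun i => .inr (u, w, i)) := by
    intro z hz
    obtain ⟨i, rfl⟩ := mem_lane_of_forall_not_inl W hW rfl z (List.mem_toFinset.mp hz)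
    simp
  have := (Finset.card_le_card hsub).trans Finset.card_image_le
  rw [List.toFinset_card_of_nodup hp.support_nodup, Walk.length_support, Finset.card_univ,
    Fintype.card_fin] at this
  omega

lemma exists_eq_append_cons_inl {u w : V} {j : Fin (m + 1)} {y}
    (W : (laneGraph G m).Walk (.inr (u, w, j)) y) (hW : W.IsPath)
    (hinl : ∃ v, .inl v ∈ W.support) :
    ∃ (i : Fin (m + 1)) (x : V) (W₁ : (laneGraph G m).Walk (.inr (u, w, j)) (.inr (u, w, i)))
      (hx : (laneGraph G m).Adj (.inr (u, w, i)) (.inl x)) (W₂ : (laneGraph G m).Walk (.inl x) y),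
      W₁.length ≤ m ∧ W = W₁.append (W₂.cons hx) := by
  obtain ⟨v, hv⟩ := hinl
  obtain ⟨x', _, W₁, hx, W₂, ⟨x, rfl⟩, hW₁, rfl⟩ :=
    W.exists_eq_append_cons (fun z => ∃ v, z = .inl v) (by simp) ⟨_, hv, v, rfl⟩
  have hW₁' : ∀ v, .inl v ∉ W₁.support := fun v hv => hW₁ _ hv ⟨v, rfl⟩
  obtain ⟨i, rfl⟩ := mem_lane_of_forall_not_inl W₁ hW₁' rfl x' W₁.end_mem_support
  exact ⟨i, x, W₁, hx, W₂, length_le_of_forall_not_inl hW.of_append_left hW₁', rfl⟩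

lemma exists_isPath_of_isPath_inl {u : V} {y} (W : (laneGraph G m).Walk (.inl u) y)
    (hW : W.IsPath) : ∃ (b : V) (Q : G.Walk u b), Q.IsPath ∧ (∀ v ∈ Q.support, .inl v ∈ W.support) ∧
      W.length ≤ (m + 2) * Q.length + (m + 1) := by
  induction hn : W.length using Nat.strong_induction_on generalizing u W with
  | _ n ih =>
  cases W with
  | nil => exact ⟨u, .nil, .nil, by simp, by simp [← hn]⟩
  | @cons _ z _ h W' =>
    rw [Walk.cons_isPath_iff] at hW
    rcases z with v | ⟨u₁, w₁, j₁⟩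
    · exact absurd h not_adj_inl_inl
    by_cases hinl : ∃ v, .inl v ∈ W'.support
    · obtain ⟨j₂, x, W₁, hx, W₂, hlen₁, rfl⟩ := exists_eq_append_cons_inl W' hW.1 hinl
      have hsub : ∀ z ∈ W₂.support, z ∈ (W₁.append (W₂.cons hx)).support := fun z hz => by
        simp [Walk.mem_support_append_iff, hz]
      have hux : u ≠ x := by
        rintro rfl
        exact hW.2 (hsub _ W₂.start_mem_support)
      obtain ⟨b, Q, hQ, hQW, hlen₂⟩ :=
        ih W₂.length (by simp [← hn]; omega) W₂ hW.1.of_append_right.of_cons rfl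
      refine ⟨b, Q.cons (adj_of_adj_inl_of_adj_inl h hx hux), hQ.cons fun hu => hW.2 ?_, ?_, ?_⟩
      · exact hsub _ (hQW u hu)
      · simp only [Walk.support_cons, List.mem_cons, forall_eq_or_imp]
        exact ⟨by simp, fun v hv => .inr (hsub _ (hQW v hv))⟩
      · simp only [← hn, Walk.length_cons, Walk.length_append]
        nlinarith
    · push Not at hinl
      have := length_le_of_forall_not_inl hW.1 hinl
      exact ⟨u, .nil, .nil, by simp, by simp [← hn]; omega⟩

lemma length_le_of_isPath [Fintype V] {x y} {W : (laneGraph G m).Walk x y} (hW : W.IsPath) :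
    W.length ≤ (m + 2) * maxPathLength G + 2 * (m + 1) := by
  by_cases hinl : ∃ v, .inl v ∈ W.support
  · rcases x with u | ⟨u, w, j⟩
    · obtain ⟨b, Q, hQ, -, hlen⟩ := exists_isPath_of_isPath_inl W hW
      nlinarith [hQ.length_le_maxPathLength]
    obtain ⟨i, x, W₁, hx, W₂, h₁, rfl⟩ := exists_eq_append_cons_inl W hW hinl
    obtain ⟨b, Q, hQ, -, h₂⟩ := exists_isPath_of_isPath_inl W₂ hW.of_append_right.of_cons
    simp only [Walk.length_append, Walk.length_cons]
    nlinarith [hQ.length_le_maxPathLength]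
  · push Not at hinl
    have := length_le_of_forall_not_inl hW hinl
    nlinarith

lemma maxPathLength_laneGraph [Fintype V] {a b : V} {p : G.Walk a b} (hp : IsLongestPath G p)
    (hab : a ≠ b) : maxPathLength (laneGraph G m) = (m + 2) * maxPathLength G + 2 * (m + 1) := by
  have hlift := isPath_liftPath (m := m) hp.1 hab
  refine le_antisymm (csSup_le ⟨_, _, _, _, hlift, rfl⟩ ?_) ?_
  · rintro _ ⟨_, _, W, hW, rfl⟩
    exact length_le_of_isPath hW
  · simpa [length_liftPath, hp.2] using hlift.length_le_maxPathLength

lemma isLongestPath_liftPath [Fintype V] {a b : V} {p : G.Walk a b} (hp : IsLongestPath G p)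
    (hab : a ≠ b) : IsLongestPath (laneGraph G m) (liftPath G m p) :=
  ⟨isPath_liftPath hp.1 hab, by rw [length_liftPath, hp.2, maxPathLength_laneGraph hp hab]⟩

variable (G m) in
open Classical in
/-- On the lane of an edge with an end outside `U`: the cost of leaving the lane through the
cheaper end and then reaching `U` at `m + 2` steps per edge of `G`. -/
def potential (U : Set V) : V ⊕ V × V × Fin (m + 1) → ℕ
  | .inl x => (m + 2) * distToSet G x U
  | .inr (u, w, j) =>
    if G.Adj u w ∧ ¬ (u ∈ U ∧ w ∈ U) then
      min (j + 1 + (m + 2) * distToSet G u U) (m + 1 - j + (m + 2) * distToSet G w U)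
    else (m + 2) * distToSet G u U

section Potential

variable {U : Set V}

lemma potential_le_add_one (hG : G.Connected) (hU : U.Nonempty) {x y}
    (h : (laneGraph G m).Adj x y) : potential G m U x ≤ potential G m U y + 1 := by
  have lip : ∀ {v v'}, G.Adj v v' →
      (m + 2) * distToSet G v U ≤ (m + 2) * distToSet G v' U + (m + 2) := fun h => by
    have := distToSet_le_add_one_of_adj hG hU h
    nlinarith
  suffices ∀ {x y}, Step G m x y → potential G m U x ≤ potential G m U y + 1 ∧
      potential G m U y ≤ potential G m U x + 1 from h.elim (this · |>.1) (this · |>.2)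
  intro x y h
  cases h with
  | enter u w =>
    simp only [potential]
    split_ifs with hc
    · have := lip hc.1
      simp only [min_def, Fin.val_zero]
      split_ifs <;> omega
    · omega
  | next u w i =>
    simp only [potential]
    split_ifs
    · simp only [min_def, Fin.val_succ, Fin.val_castSucc]
      split_ifs <;> omega
    · omega
  | @exit u w h =>
    simp only [potential, h, true_and, Fin.val_last]
    split_ifs with hc
    · have := lip h.symm
      simp only [min_def]
      split_ifs <;> omega
    · obtain ⟨hu, hw⟩ := not_not.mp (not_and.mp hc h)
      simp [distToSet_eq_zero_of_mem_s10 hu, distToSet_eq_zero_of_mem_s10 hw]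

lemma potential_inl_eq_zero {x : V} (hx : x ∈ U) : potential G m U (.inl x) = 0 := by
  simp [potential, distToSet_eq_zero_of_mem_s10 hx]

lemma potential_inr_eq_zero {u w : V} {j : Fin (m + 1)} (hu : u ∈ U) (hw : w ∈ U) :
    potential G m U (.inr (u, w, j)) = 0 := by
  simp [potential, hu, hw, distToSet_eq_zero_of_mem_s10 hu]

/-- On the lane of an edge `uw`, the potential dominates the interpolation
`(m + 1 - j) d(u) + (j + 1) d(w)`, as `d` is 1-Lipschitz. The weights do not depend on `U`, which
is what lets the lower bound `k` on sums of three distances in `G` pass to the potentials. -/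
lemma exists_le_potential (hG : G.Connected) (z : V ⊕ V × V × Fin (m + 1)) :
    ∃ (x y : V) (α β : ℕ), α + β = m + 2 ∧ ∀ U : Set V, U.Nonempty →
      α * distToSet G x U + β * distToSet G y U ≤ potential G m U z := by
  rcases z with x | ⟨u, w, j⟩
  · exact ⟨x, x, m + 2, 0, rfl, fun U _ => by simp [potential]⟩
  by_cases huw : G.Adj u w
  · refine ⟨u, w, m + 1 - j, j + 1, by omega, fun U hU => ?_⟩
    have hj := j.is_le
    have h₁ := distToSet_le_add_one_of_adj hG hU huw
    have h₂ := distToSet_le_add_one_of_adj hG hU huw.symm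
    simp only [potential, huw, true_and]
    split_ifs with hc
    · have hca : m + 1 - (j : ℕ) + ((j : ℕ) + 1) = m + 2 := by omega
      generalize m + 1 - (j : ℕ) = c at hca ⊢
      generalize (j : ℕ) + 1 = a at hca ⊢
      rw [← hca, le_min_iff]
      constructor
      · nlinarith [Nat.mul_le_mul_left a h₂]
      · nlinarith [Nat.mul_le_mul_left c h₁]
    · obtain ⟨hu, hw⟩ := not_not.mp (not_and.mp hc huw)
      simp [distToSet_eq_zero_of_mem_s10 hu, distToSet_eq_zero_of_mem_s10 hw]
  · exact ⟨u, u, m + 2, 0, rfl, fun U _ => by simp [potential, huw]⟩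

lemma potential_eq_zero_of_mem_liftPath {a b : V} {p : G.Walk a b} {z}
    (hz : z ∈ (liftPath G m p).support) : potential G m (walkVerts p) z = 0 := by
  rw [liftPath, Walk.mem_support_append_iff, Walk.support_reverse, List.mem_reverse] at hz
  rcases hz with hz | hz
  · rcases mem_support_laneWalk hz with rfl | ⟨i, -, rfl⟩
    · exact potential_inl_eq_zero p.start_mem_support
    · exact potential_inr_eq_zero p.start_mem_support p.start_mem_support
  · rcases z with v | ⟨u, w, i⟩
    · exact potential_inl_eq_zero (mem_support_liftWalk_inl hz)
    · obtain ⟨hu, hw, -⟩ := mem_support_liftWalk_inr hz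
      exact potential_inr_eq_zero hu hw

lemma potential_le_distToSet_liftPath (hG : G.Connected) {a b : V} (p : G.Walk a b) (z) :
    potential G m (walkVerts p) z ≤ distToSet (laneGraph G m) z (walkVerts (liftPath G m p)) :=
  le_distToSet_of_lipschitz (connected_laneGraph hG) ⟨_, (liftPath G m p).start_mem_support⟩
    (fun _ _ => potential_le_add_one hG ⟨_, p.start_mem_support⟩)
    (fun _ => potential_eq_zero_of_mem_liftPath) z

end Potential

lemma le_fThree_liftPath (hG : G.Connected) {k : ℕ} {a₁ b₁ a₂ b₂ a₃ b₃ : V}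
    {p₁ : G.Walk a₁ b₁} {p₂ : G.Walk a₂ b₂} {p₃ : G.Walk a₃ b₃}
    (hk : ∀ x, k ≤ distToSet G x (walkVerts p₁) + distToSet G x (walkVerts p₂) +
      distToSet G x (walkVerts p₃)) :
    (m + 2) * k ≤ fThree (laneGraph G m) (liftPath G m p₁) (liftPath G m p₂) (liftPath G m p₃) := by
  have : Nonempty (V ⊕ V × V × Fin (m + 1)) := ⟨.inl hG.nonempty.some⟩
  refine le_fThree fun z => ?_
  obtain ⟨x, y, α, β, hαβ, hz⟩ := exists_le_potential hG z
  have h₁ := hz (walkVerts p₁) ⟨_, p₁.start_mem_support⟩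
  have h₂ := hz (walkVerts p₂) ⟨_, p₂.start_mem_support⟩
  have h₃ := hz (walkVerts p₃) ⟨_, p₃.start_mem_support⟩
  have d₁ := potential_le_distToSet_liftPath hG p₁ z
  have d₂ := potential_le_distToSet_liftPath hG p₂ z
  have d₃ := potential_le_distToSet_liftPath hG p₃ z
  rw [← hαβ]
  nlinarith [Nat.mul_le_mul_left α (hk x), Nat.mul_le_mul_left β (hk y)]

lemma card_vertices_le [Fintype V] :
    Fintype.card (V ⊕ V × V × Fin (m + 1)) ≤ (Fintype.card V + Fintype.card V ^ 2) * (m + 2) := by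
  simp only [Fintype.card_sum, Fintype.card_prod, Fintype.card_fin]
  nlinarith

end LaneGraph

open LaneGraph

/-- The conjecture that any three longest paths of a finite connected graph have a
common vertex (`f(G, P) = 0`) is equivalent to the existence of a sublinear
non-decreasing function `g` bounding `f(G, P)` in terms of the order of `G`. -/
theorem conjecture_iff_sublinear_bound :
    (∀ (V : Type) [Fintype V] (G : SimpleGraph V), G.Connected →
      ∀ (u₁ v₁ u₂ v₂ u₃ v₃ : V) (p₁ : G.Walk u₁ v₁) (p₂ : G.Walk u₂ v₂) (p₃ : G.Walk u₃ v₃),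
        IsLongestPath G p₁ → IsLongestPath G p₂ → IsLongestPath G p₃ →
        pathSigma G p₁ ≠ pathSigma G p₂ → pathSigma G p₁ ≠ pathSigma G p₃ →
        pathSigma G p₂ ≠ pathSigma G p₃ →
        fThree G p₁ p₂ p₃ = 0) ↔
    (∃ g : ℕ → ℝ, Monotone g ∧
      Filter.Tendsto (fun n : ℕ => g n / n) Filter.atTop (nhds 0) ∧
      ∀ (V : Type) [Fintype V] (G : SimpleGraph V), G.Connected →
        ∀ (u₁ v₁ u₂ v₂ u₃ v₃ : V) (p₁ : G.Walk u₁ v₁) (p₂ : G.Walk u₂ v₂) (p₃ : G.Walk u₃ v₃),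
          IsLongestPath G p₁ → IsLongestPath G p₂ → IsLongestPath G p₃ →
          pathSigma G p₁ ≠ pathSigma G p₂ → pathSigma G p₁ ≠ pathSigma G p₃ →
          pathSigma G p₂ ≠ pathSigma G p₃ →
          (fThree G p₁ p₂ p₃ : ℝ) ≤ g (Fintype.card V)) := by
  refine ⟨fun h => ⟨0, monotone_const, by simp, ?_⟩, ?_⟩
  · intro V _ G hG u₁ v₁ u₂ v₂ u₃ v₃ p₁ p₂ p₃ hl₁ hl₂ hl₃ h₁₂ h₁₃ h₂₃
    simp [h V G hG _ _ _ _ _ _ p₁ p₂ p₃ hl₁ hl₂ hl₃ h₁₂ h₁₃ h₂₃]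
  rintro ⟨g, hg_mono, hg_lim, hg⟩ V _ G hG u₁ v₁ u₂ v₂ u₃ v₃ p₁ p₂ p₃ hl₁ hl₂ hl₃ h₁₂ h₁₃ h₂₃
  by_contra hk
  have hL : maxPathLength G ≠ 0 := fun h => hk (fThree_eq_zero_of_maxPathLength_eq_zero hG h ..)
  have hn : 0 < Fintype.card V + Fintype.card V ^ 2 :=
    Nat.add_pos_left (Fintype.card_pos_iff.mpr hG.nonempty) _
  refine hk (Nat.cast_eq_zero.mp (le_antisymm (nonpos_of_mul_le_of_sublinear hg_lim hn
    fun m => ?_) (Nat.cast_nonneg _)))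
  calc ((m : ℝ) + 2) * fThree G p₁ p₂ p₃ = ((m + 2) * fThree G p₁ p₂ p₃ : ℕ) := by push_cast; rfl
    _ ≤ fThree (laneGraph G m) (liftPath G m p₁) (liftPath G m p₂) (liftPath G m p₃) := by
      exact_mod_cast le_fThree_liftPath hG (fThree_le_s10 p₁ p₂ p₃)
    _ ≤ g (Fintype.card (V ⊕ V × V × Fin (m + 1))) :=
      hg _ _ (connected_laneGraph hG) _ _ _ _ _ _ _ _ _
        (isLongestPath_liftPath hl₁ (hl₁.ne hL)) (isLongestPath_liftPath hl₂ (hl₂.ne hL))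
        (isLongestPath_liftPath hl₃ (hl₃.ne hL)) (h₁₂ ∘ pathSigma_eq_of_liftPath)
        (h₁₃ ∘ pathSigma_eq_of_liftPath) (h₂₃ ∘ pathSigma_eq_of_liftPath)
    _ ≤ g ((Fintype.card V + Fintype.card V ^ 2) * (m + 2)) := hg_mono card_vertices_le
end
end
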